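/- Let k ≥ 0 and (M,w_d) a finite pointed model with worlds W, and let x,y ∈ W \ {w_d} be distinct worlds with b(x) ≥ b(y) ≥ 0 and x k'-bisimilar to y for k' = b(y). Let (M',w_d) be obtained by deleting y and redirecting all incoming edges of y to x (i.e., W' = W \ {y}, R'_i = (R_i ∩ (W'×W')) ∪ {(w,x) | w R_i y}, V'(p) = V(p) ∩ W'). Then (M,w_d) is k-bisimilar to (M',w_d). -/

import Mathlib

/-- A finite pointed Kripke model with modality indices `I` and atoms `P`. -/
structure PModel (I P : Type) where
  W : Type
  fin : Finite W
  R : I → W → W → Prop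
  V : P → W → Prop
  d : W

variable {I P : Type}

/-- `h`-bisimilarity between worlds of two models (back-and-forth to depth `h`). -/
def Bisim (M N : PModel I P) : ℕ → M.W → N.W → Prop
  | 0, w, v => ∀ p, M.V p w ↔ N.V p v
  | h+1, w, v => (∀ p, M.V p w ↔ N.V p v)
      ∧ (∀ i w', M.R i w w' → ∃ v', N.R i v v' ∧ Bisim M N h w' v')
      ∧ (∀ i v', N.R i v v' → ∃ w', M.R i w w' ∧ Bisim M N h w' v')

/-- `k`-bisimilarity of pointed models. -/
def PBisim (k : ℕ) (M N : PModel I P) : Prop := Bisim M N k M.d N.d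

/-- Directed paths of length `n`. -/
def Steps (M : PModel I P) : ℕ → M.W → M.W → Prop
  | 0, w, v => w = v
  | n+1, w, v => ∃ u i, M.R i w u ∧ Steps M n u v

/-- Depth of a world: length of a shortest path from the designated world (`⊤` if none). -/
noncomputable def depth (M : PModel I P) (w : M.W) : ℕ∞ :=
  sInf {n : ℕ∞ | ∃ m : ℕ, n = (m : ℕ∞) ∧ Steps M m M.d w}

/-- Bound `b(w) = k − d(w)`, with `⊥` for unreachable worlds. -/
noncomputable def bound (k : ℕ) (M : PModel I P) (w : M.W) : WithBot ℤ :=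
  ENat.recTopCoe (⊥ : WithBot ℤ) (fun n : ℕ => (((k : ℤ) - n : ℤ) : WithBot ℤ)) (depth M w)

/-- The bound as a natural number (meaningful when `0 ≤ bound k M w`). -/
noncomputable def nbound (k : ℕ) (M : PModel I P) (w : M.W) : ℕ :=
  k - (depth M w).toNat
/-- `x` represents `y` : `b(x) ≥ b(y) ≥ 0` and `x ∼_{b(y)} y`. -/
noncomputable def Repr' (k : ℕ) (M : PModel I P) (x y : M.W) : Prop :=
  0 ≤ bound k M y ∧ bound k M y ≤ bound k M x ∧ Bisim M M (nbound k M y) x y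

/-- `x` strictly represents `y`. -/
noncomputable def SRepr (k : ℕ) (M : PModel I P) (x y : M.W) : Prop :=
  Repr' k M x y ∧ bound k M y < bound k M x

/-- Maximal representatives. -/
noncomputable def maxRepr (k : ℕ) (M : PModel I P) : Set M.W :=
  {x | 0 ≤ bound k M x ∧ ∀ y, ¬ SRepr k M y x}

/-- Representative class `[x]_{b(x)}`. -/
noncomputable def reprClass (k : ℕ) (M : PModel I P) (x : M.W) : Set M.W :=
  {y | Bisim M M (nbound k M x) x y}

/-! The copy of a surviving world `w` in the new model is `h`-bisimilar to `w` whenever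
`d(w) + h ≤ k`, by induction on `h`. An edge into `y` is answered by the redirected edge into `x`:
`x ∼_h y` because `h ≤ k - d(y) = b(y)`, and `x`, being no deeper than `y` (as `b(y) ≤ b(x)`),
keeps enough budget for the induction hypothesis. Of the depth, only `d(w') ≤ d(w) + 1` along
edges matters. -/

namespace Bisim

variable {M N O : PModel I P}

theorem symm : ∀ {h : ℕ} {w v}, Bisim M N h w v → Bisim N M h v w
  | 0, _, _, hb => fun p => (hb p).symm
  | _ + 1, _, _, ⟨hatom, hforth, hback⟩ =>
    ⟨fun p => (hatom p).symm,
     fun i v' hr => (hback i v' hr).imp fun _ ⟨hr', hb⟩ => ⟨hr', hb.symm⟩,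
     fun i w' hr => (hforth i w' hr).imp fun _ ⟨hr', hb⟩ => ⟨hr', hb.symm⟩⟩

theorem trans : ∀ {h : ℕ} {w v u}, Bisim M N h w v → Bisim N O h v u → Bisim M O h w u
  | 0, _, _, _, hwv, hvu => fun p => (hwv p).trans (hvu p)
  | _ + 1, _, _, _, ⟨hatom, hforth, hback⟩, ⟨hatom', hforth', hback'⟩ =>
    ⟨fun p => (hatom p).trans (hatom' p),
     fun i w' hr =>
       let ⟨v', hr', hb⟩ := hforth i w' hr
       let ⟨u', hr'', hb'⟩ := hforth' i v' hr'
       ⟨u', hr'', hb.trans hb'⟩,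
     fun i u' hr =>
       let ⟨v', hr', hb'⟩ := hback' i u' hr
       let ⟨w', hr'', hb⟩ := hback i v' hr'
       ⟨w', hr'', hb.trans hb'⟩⟩

theorem of_succ : ∀ {h : ℕ} {w v}, Bisim M N (h + 1) w v → Bisim M N h w v
  | 0, _, _, hb => hb.1
  | _ + 1, _, _, ⟨hatom, hforth, hback⟩ =>
    ⟨hatom, fun i w' hr => (hforth i w' hr).imp fun _ ⟨hr', hb⟩ => ⟨hr', hb.of_succ⟩,
      fun i v' hr => (hback i v' hr).imp fun _ ⟨hr', hb⟩ => ⟨hr', hb.of_succ⟩⟩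

theorem mono {h h' : ℕ} (hle : h' ≤ h) {w v} (hb : Bisim M N h w v) : Bisim M N h' w v := by
  induction hle with
  | refl => exact hb
  | step _ ih => exact ih hb.of_succ

end Bisim

section Depth

variable {M : PModel I P}

theorem Steps.snoc {i : I} :
    ∀ {m : ℕ} {u v v' : M.W}, Steps M m u v → M.R i v v' → Steps M (m + 1) u v'
  | 0, _, _, v', rfl, hr => ⟨v', i, hr, rfl⟩
  | _ + 1, _, _, _, ⟨u', j, hr, hs⟩, hr' => ⟨u', j, hr, hs.snoc hr'⟩

theorem depth_le_of_steps {m : ℕ} {w : M.W} (hs : Steps M m M.d w) : depth M w ≤ m :=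
  sInf_le ⟨m, rfl, hs⟩

theorem depth_d : depth M M.d = 0 :=
  nonpos_iff_eq_zero.mp (depth_le_of_steps (m := 0) rfl)

theorem depth_le_add_one {i : I} {w w' : M.W} (hr : M.R i w w') :
    depth M w' ≤ depth M w + 1 := by
  conv_rhs => rw [depth, ENat.sInf_add]
  refine le_iInf₂ fun _ ⟨m, hm, hs⟩ => ?_
  rw [hm]
  exact_mod_cast depth_le_of_steps (hs.snoc hr)

theorem bound_of_depth_eq_top {k : ℕ} {w : M.W} (hw : depth M w = ⊤) : bound k M w = ⊥ := by
  simp [bound, hw]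

theorem bound_of_depth_eq_coe {k n : ℕ} {w : M.W} (hw : depth M w = n) :
    bound k M w = ((k - n : ℤ) : WithBot ℤ) := by
  simp [bound, hw]

theorem exists_depth_eq_of_bound_nonneg {k : ℕ} {w : M.W} (h0 : 0 ≤ bound k M w) :
    ∃ n : ℕ, depth M w = n := by
  cases hw : depth M w using ENat.recTopCoe with
  | top => simp [bound_of_depth_eq_top hw] at h0
  | coe n => exact ⟨n, rfl⟩

theorem depth_le_of_bound_le {k n : ℕ} {x y : M.W} (hy : depth M y = n)
    (hb : bound k M y ≤ bound k M x) : depth M x ≤ depth M y := by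
  rw [bound_of_depth_eq_coe hy] at hb
  cases hx : depth M x using ENat.recTopCoe with
  | top => simp [bound_of_depth_eq_top hx] at hb
  | coe m =>
    rw [bound_of_depth_eq_coe hx, WithBot.coe_le_coe] at hb
    rw [hy]
    exact_mod_cast (by omega : m ≤ n)

end Depth

def redirect (M : PModel I P) (x y : M.W) (hyd : y ≠ M.d) : PModel I P where
  W := {w : M.W // w ≠ y}
  fin := by have := M.fin; exact Subtype.finite
  R := fun i w v => (M.R i w.1 v.1) ∨ (v.1 = x ∧ M.R i w.1 y)
  V := fun p w => M.V p w.1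
  d := ⟨M.d, Ne.symm hyd⟩

theorem bisim_redirect {M : PModel I P} {x y : M.W} (hxy : x ≠ y) (hyd : y ≠ M.d) {k : ℕ}
    (δ : M.W → ℕ∞) (hδ : ∀ i w w', M.R i w w' → δ w' ≤ δ w + 1) (hδxy : δ x ≤ δ y)
    (hbis : ∀ h : ℕ, δ y + h ≤ k → Bisim M M h x y) :
    ∀ (h : ℕ) (w : M.W) (hw : w ≠ y), δ w + h ≤ k →
      Bisim M (redirect M x y hyd) h w ⟨w, hw⟩
  | 0, _, _, _ => fun _ => Iff.rfl
  | h + 1, w, hw, hbudget => by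
    have succ_budget : ∀ {i w'}, M.R i w w' → δ w' + h ≤ k := fun {i w'} hr =>
      calc δ w' + h ≤ δ w + 1 + h := by gcongr; exact hδ _ _ _ hr
        _ = δ w + (h + 1 : ℕ) := by push_cast; ring
        _ ≤ k := hbudget
    have to_x : ∀ {i}, M.R i w y → Bisim M (redirect M x y hyd) h y ⟨x, hxy⟩ := fun hr =>
      (hbis h (succ_budget hr)).symm.trans <|
        bisim_redirect hxy hyd δ hδ hδxy hbis h x hxy
          ((add_le_add_left hδxy _).trans (succ_budget hr))
    refine ⟨fun _ => Iff.rfl, fun i w' hr => ?_, ?_⟩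
    · by_cases hw' : w' = y
      · subst hw'
        exact ⟨⟨x, hxy⟩, Or.inr ⟨rfl, hr⟩, to_x hr⟩
      · exact ⟨⟨w', hw'⟩, Or.inl hr, bisim_redirect hxy hyd δ hδ hδxy hbis h w' hw'
          (succ_budget hr)⟩
    · rintro i ⟨v, hv⟩ (hr | ⟨rfl, hr⟩)
      · exact ⟨v, hr, bisim_redirect hxy hyd δ hδ hδxy hbis h v hv (succ_budget hr)⟩
      · exact ⟨y, hr, to_x hr⟩

/-- Deleting a represented world `y` and redirecting its incoming edges to `x`
preserves `k`-bisimilarity. -/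
theorem delete_and_redirect (k : ℕ) (M : PModel I P) (x y : M.W)
    (hxy : x ≠ y) (hyd : y ≠ M.d)
    (h0 : 0 ≤ bound k M y) (hb : bound k M y ≤ bound k M x)
    (hbis : Bisim M M (nbound k M y) x y) :
    PBisim k M
      { W := {w : M.W // w ≠ y}
        fin := by have := M.fin; exact Subtype.finite
        R := fun i w v => (M.R i w.1 v.1) ∨ (v.1 = x ∧ M.R i w.1 y)
        V := fun p w => M.V p w.1
        d := ⟨M.d, Ne.symm hyd⟩ } := by
  obtain ⟨n, hy⟩ := exists_depth_eq_of_bound_nonneg h0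
  have hbis_le : ∀ h : ℕ, depth M y + h ≤ k → Bisim M M h x y := fun h hh => by
    rw [hy, ← Nat.cast_add, Nat.cast_le] at hh
    refine hbis.mono ?_
    rw [nbound, hy, ENat.toNat_natCast]
    omega
  exact bisim_redirect hxy hyd (depth M) (fun _ _ _ => depth_le_add_one)
    (depth_le_of_bound_le hy hb) hbis_le k M.d (Ne.symm hyd) (by simp [depth_d])
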